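/- Let n ≥ 1 and let S denote the set of triples (A,B,C) of real symmetric traceless n×n matrices satisfying ‖A‖² + ‖B‖² + ‖C‖² = 1. Define F(A,B,C) = ‖[A,B]‖² + ‖[B,C]‖² + ‖[C,A]‖² and let λ be the maximum of F over S. If (A,B,C) ∈ S is a point where F attains the maximum λ, and ‖A‖ ≥ ‖B‖ ≥ ‖C‖, then 2λ‖A‖² = ‖[A,B]‖² + ‖[A,C]‖². -/
import Mathlib
open Matrix BigOperators

/-- Frobenius norm squared of a real `n × n` matrix: the sum of the squares of all entries. -/
noncomputable def frobSq {n : ℕ} (A : Matrix (Fin n) (Fin n) ℝ) : ℝ :=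
  ∑ i, ∑ j, (A i j) ^ 2

/-- The commutator `[A, B] = A * B - B * A`. -/
def mcomm {n : ℕ} (A B : Matrix (Fin n) (Fin n) ℝ) : Matrix (Fin n) (Fin n) ℝ :=
  A * B - B * A

lemma frobSq_nonneg {n : ℕ} (A : Matrix (Fin n) (Fin n) ℝ) : 0 ≤ frobSq A := by
  apply Finset.sum_nonneg; intros i _; apply Finset.sum_nonneg; intros; positivity

lemma frobSq_eq_zero {n : ℕ} {A : Matrix (Fin n) (Fin n) ℝ} (h : frobSq A = 0) : A = 0 := by
  ext i j
  have h1 : ∀ i ∈ Finset.univ, (0:ℝ) ≤ ∑ j, (A i j)^2 := fun i _ =>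
    Finset.sum_nonneg fun j _ => sq_nonneg _
  have h2 := (Finset.sum_eq_zero_iff_of_nonneg h1).mp h i (Finset.mem_univ i)
  have h3 := (Finset.sum_eq_zero_iff_of_nonneg (fun j _ => sq_nonneg (A i j))).mp h2 j
    (Finset.mem_univ j)
  simpa using pow_eq_zero_iff (n := 2) (by norm_num) |>.mp h3

lemma frobSq_smul {n : ℕ} (r : ℝ) (A : Matrix (Fin n) (Fin n) ℝ) :
    frobSq (r • A) = r^2 * frobSq A := by
  simp [frobSq, Matrix.smul_apply, mul_pow, Finset.mul_sum, smul_eq_mul]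

lemma frobSq_neg {n : ℕ} (A : Matrix (Fin n) (Fin n) ℝ) : frobSq (-A) = frobSq A := by
  simp [frobSq]

lemma mcomm_smul {n : ℕ} (r u : ℝ) (A B : Matrix (Fin n) (Fin n) ℝ) :
    mcomm (r • A) (u • B) = (r * u) • mcomm A B := by
  simp [mcomm, smul_smul, mul_smul_comm, smul_mul_assoc, smul_sub, mul_comm]

lemma mcomm_swap {n : ℕ} (A B : Matrix (Fin n) (Fin n) ℝ) : mcomm A B = -(mcomm B A) := by
  simp [mcomm]

lemma smul_isSymm {n : ℕ} {A : Matrix (Fin n) (Fin n) ℝ} (h : A.IsSymm) (r : ℝ) :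
    (r • A).IsSymm := by
  unfold Matrix.IsSymm at *
  rw [Matrix.transpose_smul, h]

lemma quad_nonpos {α β ε : ℝ} (hε : 0 < ε)
    (h : ∀ t, 0 ≤ t → t ≤ ε → α*t + β*t^2 ≤ 0) : α ≤ 0 := by
  by_contra h'
  push_neg at h'
  set c := 2*(|β|+1) with hc
  have hc0 : 0 < c := by positivity
  set t := min ε (α/c) with ht
  have ht0 : 0 < t := lt_min hε (by positivity)
  have h1 := h t ht0.le (min_le_left _ _)
  have h2 : t * c ≤ α := (le_div_iff₀ hc0).mp (min_le_right _ _)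
  have hb : -(|β|+1) ≤ β := by cases abs_cases β <;> linarith
  nlinarith [mul_le_mul_of_nonneg_right h2 ht0.le,
    mul_le_mul_of_nonneg_right hb (mul_pos ht0 ht0).le, mul_pos h' ht0]

lemma quad_eq_zero {α β ε : ℝ} (hε : 0 < ε)
    (h : ∀ t, |t| ≤ ε → α*t + β*t^2 ≤ 0) : α = 0 := by
  have h1 : α ≤ 0 := quad_nonpos hε fun t ht0 hte =>
    h t (by rwa [abs_of_nonneg ht0])
  have h2 : -α ≤ 0 := quad_nonpos (β := β) hε fun t ht0 hte => by
    have := h (-t) (by rwa [abs_neg, abs_of_nonneg ht0])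
    nlinarith
  linarith
/-- If `λ` is the maximum of `F(A,B,C) = ‖[A,B]‖² + ‖[B,C]‖² + ‖[C,A]‖²` over triples of
symmetric traceless matrices with `‖A‖² + ‖B‖² + ‖C‖² = 1`, and `(A,B,C)` is a maximum
point with `‖A‖ ≥ ‖B‖ ≥ ‖C‖`, then `2λ‖A‖² = ‖[A,B]‖² + ‖[A,C]‖²`. -/
theorem max_point_identity (n : ℕ) (hn : 1 ≤ n) (lam : ℝ)
    (hub : ∀ A B C : Matrix (Fin n) (Fin n) ℝ,
      A.IsSymm → B.IsSymm → C.IsSymm →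
      A.trace = 0 → B.trace = 0 → C.trace = 0 →
      frobSq A + frobSq B + frobSq C = 1 →
      frobSq (mcomm A B) + frobSq (mcomm B C) + frobSq (mcomm C A) ≤ lam)
    (A B C : Matrix (Fin n) (Fin n) ℝ)
    (hA : A.IsSymm) (hB : B.IsSymm) (hC : C.IsSymm)
    (hA0 : A.trace = 0) (hB0 : B.trace = 0) (hC0 : C.trace = 0)
    (hS : frobSq A + frobSq B + frobSq C = 1)
    (hattain : frobSq (mcomm A B) + frobSq (mcomm B C) + frobSq (mcomm C A) = lam)
    (hAB : frobSq B ≤ frobSq A) (hBC : frobSq C ≤ frobSq B) :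
    2 * lam * frobSq A = frobSq (mcomm A B) + frobSq (mcomm A C) := by
  have hac : frobSq (mcomm A C) = frobSq (mcomm C A) := by
    rw [mcomm_swap A C, frobSq_neg]
  rw [hac]
  set a := frobSq A with ha
  set b := frobSq B with hbdef
  set c := frobSq C with hcdef
  set p1 := frobSq (mcomm A B) with hp1
  set Q := frobSq (mcomm B C) with hQ
  set p2 := frobSq (mcomm C A) with hp2
  have hb0' : 0 ≤ b := frobSq_nonneg B
  have hc0' : 0 ≤ c := frobSq_nonneg C
  by_cases hs : b + c = 0
  · -- degenerate case: B = C = 0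
    have hb : b = 0 := by linarith
    have hc : c = 0 := by linarith
    have hBz : B = 0 := frobSq_eq_zero hb
    have hCz : C = 0 := frobSq_eq_zero hc
    have e1 : p1 = 0 := by rw [hp1, hBz]; simp [mcomm, frobSq]
    have e2 : p2 = 0 := by rw [hp2, hCz]; simp [mcomm, frobSq]
    have e3 : Q = 0 := by rw [hQ, hBz]; simp [mcomm, frobSq]
    have : lam = 0 := by rw [← hattain, e1, e2, e3]; ring
    rw [this, e1, e2]; ring
  · have hs' : 0 < b + c := lt_of_le_of_ne (by linarith) (Ne.symm hs)
    set s := b + c with hsdef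
    have ha0' : 0 < a := by nlinarith
    have hsum : a + s = 1 := by rw [hsdef]; linarith
    have hs0 : s ≠ 0 := ne_of_gt hs'
    set r := a / s with hr
    have hr0 : 0 < r := div_pos ha0' hs'
    have hrs : r * s = a := by rw [hr]; field_simp
    set ε := min 1 (s / a) with hε
    have hε0 : 0 < ε := lt_min one_pos (div_pos hs' ha0')
    have key : ∀ t : ℝ, |t| ≤ ε →
        ((1 - r) * (p1 + p2) - 2 * r * Q) * t + (r ^ 2 * Q - r * (p1 + p2)) * t ^ 2 ≤ 0 := by
      intro t hte
      have habs := abs_le.mp hte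
      have hε1 : ε ≤ 1 := min_le_left _ _
      have hx : (0:ℝ) ≤ 1 + t := by linarith [habs.1]
      have hy : (0:ℝ) ≤ 1 - r * t := by
        have h1 : t ≤ s / a := le_trans habs.2 (min_le_right _ _)
        have h2 : r * t ≤ r * (s / a) := by nlinarith
        have h3 : r * (s / a) = 1 := by rw [hr]; field_simp
        linarith
      set u := Real.sqrt (1 + t) with hu
      set v := Real.sqrt (1 - r * t) with hv
      have hu2 : u ^ 2 = 1 + t := Real.sq_sqrt hx
      have hv2 : v ^ 2 = 1 - r * t := Real.sq_sqrt hy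
      have hcon : frobSq (u • A) + frobSq (v • B) + frobSq (v • C) = 1 := by
        rw [frobSq_smul, frobSq_smul, frobSq_smul, ← ha, ← hbdef, ← hcdef, hu2, hv2]
        have hyst : (1 - r * t) * s = s - a * t := by linear_combination (-t) * hrs
        have h4 : (1 + t) * a + (1 - r * t) * s = 1 := by linear_combination hyst + hsum
        rw [hsdef] at h4
        linear_combination h4
      have hle := hub (u • A) (v • B) (v • C) (smul_isSymm hA u) (smul_isSymm hB v)
        (smul_isSymm hC v) (by simp [Matrix.trace_smul, hA0])
        (by simp [Matrix.trace_smul, hB0]) (by simp [Matrix.trace_smul, hC0]) hcon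
      rw [mcomm_smul, mcomm_smul, mcomm_smul, frobSq_smul, frobSq_smul, frobSq_smul,
        mul_pow, mul_pow, mul_pow, hu2, hv2, ← hp1, ← hQ, ← hp2] at hle
      have hlam : p1 + Q + p2 = lam := hattain
      have hid : ((1 - r) * (p1 + p2) - 2 * r * Q) * t + (r ^ 2 * Q - r * (p1 + p2)) * t ^ 2
          = (1 + t) * (1 - r * t) * p1 + ((1 - r * t) * (1 - r * t)) * Q
            + ((1 - r * t) * (1 + t)) * p2 - (p1 + Q + p2) := by ring
      linarith [hle, hid, hlam]
    have hα := quad_eq_zero hε0 key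
    have hkey : (s - a) * (p1 + p2) = 2 * a * Q := by
      rw [hr] at hα
      field_simp at hα
      linarith
    have hlam : p1 + Q + p2 = lam := hattain
    have hs1 : s = 1 - a := by linarith
    linear_combination (-1) * hkey + (p1 + p2) * hs1 - 2 * a * hlam
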